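/- Let p be an odd prime, n ≥ 1, and R a commutative ring in which p·1 = 0. Let q, r ∈ R[X] be polynomials of degree strictly less than p^n, and suppose that in the ring R[X₁, X₂, ε₁, ε₂]/(ε₁², ε₂²) the identity q(X₁+X₂) + (ε₁+ε₂)·r(X₁+X₂) = q(X₁) + ε₁·r(X₁) + q(X₂) + ε₂·r(X₂) holds. Then r is a constant polynomial and there exist a_0, …, a_{n−1} ∈ R such that q = Σ_{k=0}^{n−1} a_k X^{p^k}. -/
import Mathlib


open Polynomial


private lemma lucas_pow_aux (p : ℕ) (hp : p.Prime) : ∀ (t c : ℕ),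
    Nat.choose (p ^ t * c) (p ^ t) ≡ c [MOD p] := by
  haveI : Fact p.Prime := ⟨hp⟩
  intro t
  induction t with
  | zero => intro c; simp [Nat.ModEq.refl]
  | succ t ih =>
    intro c
    have h1 := Choose.choose_modEq_choose_mod_mul_choose_div_nat (p := p)
      (n := p ^ (t+1) * c) (k := p ^ (t+1))
    have e1 : p ^ (t+1) * c = p * (p ^ t * c) := by ring
    have e2 : p ^ (t+1) = p * p ^ t := by ring
    rw [e1, e2, Nat.mul_mod_right, Nat.mul_mod_right,
      Nat.mul_div_cancel_left _ hp.pos, Nat.mul_div_cancel_left _ hp.pos] at h1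
    rw [e1, e2]
    simpa using h1.trans ((ih c).mul_left _)

private lemma not_dvd_choose_ordProj_aux {p m : ℕ} (hp : p.Prime) (hm : m ≠ 0) :
    ¬ p ∣ Nat.choose m (p ^ (m.factorization p)) := by
  set t := m.factorization p
  have hmul : p ^ t * (m / p ^ t) = m := Nat.ordProj_mul_ordCompl_eq_self m p
  have hnd : ¬ p ∣ m / p ^ t := Nat.not_dvd_ordCompl hp hm
  intro hdvd
  apply hnd
  have hl := lucas_pow_aux p hp t (m / p ^ t)
  rw [hmul] at hl
  have h0 : 0 ≡ m / p ^ t [MOD p] := (Nat.modEq_zero_iff_dvd.mpr hdvd).symm.trans hl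
  exact Nat.modEq_zero_iff_dvd.mp h0.symm

/-- Let `p` be an odd prime, `n ≥ 1`, `R` a commutative ring with `p·1 = 0`,
and `q, r ∈ R[X]` of degree `< p^n`.  If in `R[X₁, X₂, ε₁, ε₂]/(ε₁², ε₂²)` (here
`X₁ = X 0, X₂ = X 1, ε₁ = X 2, ε₂ = X 3`) we have
`q(X₁+X₂) + (ε₁+ε₂)·r(X₁+X₂) = q(X₁) + ε₁·r(X₁) + q(X₂) + ε₂·r(X₂)`,
then `r` is constant and `q = Σ_{k=0}^{n-1} a_k X^(p^k)` for some `a_k ∈ R`. -/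
theorem stmt_7 (p n : ℕ) (hp : p.Prime) (hodd : Odd p) (hn : 1 ≤ n)
    (R : Type) [CommRing R] (hpR : (p : R) = 0)
    (q r : Polynomial R)
    (hq : q.degree < (p ^ n : ℕ)) (hr : r.degree < (p ^ n : ℕ))
    (I : Ideal (MvPolynomial (Fin 4) R))
    (hI : I = Ideal.span {MvPolynomial.X 2 ^ 2, MvPolynomial.X 3 ^ 2})
    (h : Ideal.Quotient.mk I
        (Polynomial.aeval (MvPolynomial.X 0 + MvPolynomial.X 1 : MvPolynomial (Fin 4) R) q +
          (MvPolynomial.X 2 + MvPolynomial.X 3) *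
            Polynomial.aeval (MvPolynomial.X 0 + MvPolynomial.X 1 : MvPolynomial (Fin 4) R) r) =
      Ideal.Quotient.mk I
        (Polynomial.aeval (MvPolynomial.X 0 : MvPolynomial (Fin 4) R) q +
          MvPolynomial.X 2 * Polynomial.aeval (MvPolynomial.X 0 : MvPolynomial (Fin 4) R) r +
          Polynomial.aeval (MvPolynomial.X 1 : MvPolynomial (Fin 4) R) q +
          MvPolynomial.X 3 * Polynomial.aeval (MvPolynomial.X 1 : MvPolynomial (Fin 4) R) r)) :
    (∃ c : R, r = C c) ∧
    (∃ a : Fin n → R, q = ∑ k : Fin n, C (a k) * X ^ (p ^ (k : ℕ))) := by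
  rw [Ideal.Quotient.eq] at h
  -- generic specialization lemma
  have happ : ∀ {S : Type} [CommRing S] [Algebra R S] (φ : MvPolynomial (Fin 4) R →ₐ[R] S),
      φ (MvPolynomial.X 2) ^ 2 = 0 → φ (MvPolynomial.X 3) ^ 2 = 0 →
      Polynomial.aeval (φ (MvPolynomial.X 0) + φ (MvPolynomial.X 1)) q +
        (φ (MvPolynomial.X 2) + φ (MvPolynomial.X 3)) *
          Polynomial.aeval (φ (MvPolynomial.X 0) + φ (MvPolynomial.X 1)) r =
      Polynomial.aeval (φ (MvPolynomial.X 0)) q +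
        φ (MvPolynomial.X 2) * Polynomial.aeval (φ (MvPolynomial.X 0)) r +
        Polynomial.aeval (φ (MvPolynomial.X 1)) q +
        φ (MvPolynomial.X 3) * Polynomial.aeval (φ (MvPolynomial.X 1)) r := by
    intro S _ _ φ h2 h3
    have hker : I ≤ RingHom.ker φ.toRingHom := by
      rw [hI, Ideal.span_le]
      rintro x hx
      simp only [Set.mem_insert_iff, Set.mem_singleton_iff] at hx
      rcases hx with rfl | rfl <;> simp [RingHom.mem_ker, map_pow, h2, h3]
    have h0 : φ _ = 0 := hker h
    rw [map_sub, sub_eq_zero] at h0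
    simpa only [map_add, map_mul, ← Polynomial.aeval_algHom_apply] using h0
  -- Step 1: specialize into DualNumber R[X]  -----------------------------
  have h1 := happ (S := DualNumber R[X]) (MvPolynomial.aeval
      (![0, TrivSqZeroExt.inl X, DualNumber.eps, 0] : Fin 4 → DualNumber R[X]))
    (by rw [MvPolynomial.aeval_X]
        show (DualNumber.eps : DualNumber R[X]) ^ 2 = 0
        rw [sq]; exact DualNumber.eps_mul_eps)
    (by rw [MvPolynomial.aeval_X]
        show (0 : DualNumber R[X]) ^ 2 = 0
        rw [sq, mul_zero])
  simp only [MvPolynomial.aeval_X] at h1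
  rw [show (![0, TrivSqZeroExt.inl X, DualNumber.eps, 0] : Fin 4 → DualNumber R[X]) 0 = 0 from rfl,
    show (![0, TrivSqZeroExt.inl X, DualNumber.eps, 0] : Fin 4 → DualNumber R[X]) 1
      = TrivSqZeroExt.inl X from rfl,
    show (![0, TrivSqZeroExt.inl X, DualNumber.eps, 0] : Fin 4 → DualNumber R[X]) 2
      = DualNumber.eps from rfl,
    show (![0, TrivSqZeroExt.inl X, DualNumber.eps, 0] : Fin 4 → DualNumber R[X]) 3 = 0 from rfl]
    at h1
  rw [zero_add, add_zero, zero_mul, add_zero] at h1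
  have hinl : ∀ s : Polynomial R, Polynomial.aeval (TrivSqZeroExt.inl X : DualNumber R[X]) s
      = TrivSqZeroExt.inl s := by
    intro s
    rw [show (TrivSqZeroExt.inl (X : R[X]) : DualNumber R[X]) =
      TrivSqZeroExt.inlAlgHom R R[X] R[X] X from rfl,
      Polynomial.aeval_algHom_apply, Polynomial.aeval_X_left_apply]
    rfl
  have h0e : ∀ s : Polynomial R, Polynomial.aeval (0 : DualNumber R[X]) s
      = TrivSqZeroExt.inl (C (s.coeff 0)) := by
    intro s
    rw [← Polynomial.coeff_zero_eq_aeval_zero']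
    rfl
  rw [hinl, hinl, h0e, h0e] at h1
  have hrconst : r = C (r.coeff 0) := by
    simpa [TrivSqZeroExt.snd_mul] using congrArg TrivSqZeroExt.snd h1
  have hq0 : q.coeff 0 = 0 := by
    simpa [TrivSqZeroExt.fst_mul] using congrArg TrivSqZeroExt.fst h1
  refine ⟨⟨r.coeff 0, hrconst⟩, ?_⟩
  -- Step 2: specialize into R[X][X]  --------------------------------------
  have h2 := happ (S := R[X][X]) (MvPolynomial.aeval (![C X, X, 0, 0] : Fin 4 → R[X][X]))
    (by simp [MvPolynomial.aeval_X]) (by simp [MvPolynomial.aeval_X])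
  simp only [MvPolynomial.aeval_X] at h2
  rw [show (![C X, X, 0, 0] : Fin 4 → R[X][X]) 0 = C X from rfl,
    show (![C X, X, 0, 0] : Fin 4 → R[X][X]) 1 = X from rfl,
    show (![C X, X, 0, 0] : Fin 4 → R[X][X]) 2 = 0 from rfl,
    show (![C X, X, 0, 0] : Fin 4 → R[X][X]) 3 = 0 from rfl] at h2
  simp only [add_zero, zero_add, zero_mul, mul_zero] at h2
  have hco : ∀ i j : ℕ, 1 ≤ i → 1 ≤ j → ((i+j).choose j : R) * q.coeff (i+j) = 0 := by
    intro i j hi hj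
    have key := congrArg (fun f => (Polynomial.coeff f j).coeff i) h2
    simp only [Polynomial.aeval_eq_sum_range, Polynomial.finset_sum_coeff,
      Polynomial.coeff_smul, Polynomial.coeff_add, add_comm (C X : R[X][X]) X,
      Polynomial.coeff_X_add_C_pow, ← Polynomial.C_pow, Polynomial.coeff_C,
      Polynomial.coeff_X_pow, smul_eq_mul] at key
    have hL : ∀ m, q.coeff m * (Polynomial.X ^ (m - j) * ((m.choose j : ℕ) : R[X])).coeff i
        = if m = i + j then ((i+j).choose j : R) * q.coeff (i+j) else 0 := by
      intro m
      rw [Polynomial.coeff_mul_natCast, Polynomial.coeff_X_pow]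
      by_cases hm : m = i + j
      · subst hm; rw [if_pos (by omega), if_pos rfl]; ring
      · rw [if_neg hm]
        by_cases hij : i = m - j
        · have hlt : m < j := by omega
          rw [Nat.choose_eq_zero_of_lt hlt]; simp
        · rw [if_neg hij]; ring
    simp only [hL, if_neg (show ¬ j = 0 by omega),
      apply_ite (fun s : R[X] => s.coeff i), Polynomial.coeff_one, Polynomial.coeff_zero,
      if_neg (show ¬ i = 0 by omega), ite_self, mul_zero, Finset.sum_const_zero, add_zero,
      Finset.sum_ite_eq'] at key
    by_cases hmem : i + j ∈ Finset.range (q.natDegree + 1)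
    · rwa [if_pos hmem] at key
    · have hz : q.coeff (i + j) = 0 := by
        apply Polynomial.coeff_eq_zero_of_natDegree_lt
        simp only [Finset.mem_range, not_lt] at hmem
        omega
      rw [hz, mul_zero]
  -- Step 3: coefficients at non p-powers vanish
  have hnp : ∀ m : ℕ, (∀ k : ℕ, m ≠ p ^ k) → q.coeff m = 0 := by
    intro m hm
    rcases Nat.eq_zero_or_pos m with rfl | hpos
    · exact hq0
    have hm0 : m ≠ 0 := hpos.ne'
    set t := m.factorization p with ht
    have hdvd : p ^ t ∣ m := Nat.ordProj_dvd m p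
    have hle : p ^ t ≤ m := Nat.le_of_dvd hpos hdvd
    have hne : p ^ t ≠ m := fun hEq => hm t hEq.symm
    have hlt : p ^ t < m := lt_of_le_of_ne hle hne
    have hi : 1 ≤ p ^ t := Nat.one_le_pow _ _ hp.pos
    have hj : 1 ≤ m - p ^ t := by omega
    have hsum : p ^ t + (m - p ^ t) = m := by omega
    have hc := hco (p ^ t) (m - p ^ t) hi hj
    rw [hsum] at hc
    rw [Nat.choose_symm hle] at hc
    -- hc : (m.choose (p^t) : R) * q.coeff m = 0
    have hnd : ¬ p ∣ m.choose (p ^ t) := not_dvd_choose_ordProj_aux hp hm0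
    have hcop : Nat.Coprime p (m.choose (p ^ t)) := (hp.coprime_iff_not_dvd).mpr hnd
    have hicop : IsCoprime (p : ℤ) ((m.choose (p ^ t) : ℕ) : ℤ) :=
      Int.isCoprime_iff_gcd_eq_one.mpr (by simpa [Int.gcd] using hcop)
    obtain ⟨u, v, huv⟩ := hicop
    have hcast : (u : ℤ) * (p : ℤ) + (v : ℤ) * ((m.choose (p ^ t) : ℕ) : ℤ) = 1 := huv
    have hcastR : (u : R) * (p : R) + (v : R) * ((m.choose (p ^ t) : ℕ) : R) = 1 := by
      have := congrArg (fun z : ℤ => (z : R)) hcast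
      push_cast at this
      exact this
    calc q.coeff m = ((u:R) * (p:R) + (v:R) * ((m.choose (p ^ t) : ℕ) : R)) * q.coeff m := by
          rw [hcastR, one_mul]
      _ = (u:R) * ((p:R) * q.coeff m)
            + (v:R) * (((m.choose (p ^ t) : ℕ) : R) * q.coeff m) := by ring
      _ = 0 := by rw [hpR, hc]; ring
  -- Step 4: assemble the p-power expansion
  refine ⟨fun k => q.coeff (p ^ (k : ℕ)), ?_⟩
  ext m
  rw [Polynomial.finset_sum_coeff]
  simp only [Polynomial.coeff_C_mul, Polynomial.coeff_X_pow, mul_ite, mul_one, mul_zero]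
  by_cases hm : ∃ k : Fin n, m = p ^ (k : ℕ)
  · obtain ⟨k0, rfl⟩ := hm
    rw [Finset.sum_eq_single k0]
    · rw [if_pos rfl]
    · intro b _ hb
      rw [if_neg]
      intro hEq
      exact hb (Fin.ext (Nat.pow_right_injective hp.two_le hEq.symm))
    · intro hk0; exact absurd (Finset.mem_univ k0) hk0
  · rw [Finset.sum_eq_zero]
    · by_cases hex : ∃ k : ℕ, m = p ^ k
      · obtain ⟨k, rfl⟩ := hex
        have hkn : n ≤ k := by
          by_contra hlt
          exact hm ⟨⟨k, by omega⟩, rfl⟩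
        apply Polynomial.coeff_eq_zero_of_degree_lt
        refine lt_of_lt_of_le hq ?_
        exact_mod_cast Nat.pow_le_pow_right hp.pos hkn
      · exact hnp _ (fun k hk => hex ⟨k, hk⟩)
    · intro b _
      rw [if_neg (fun hEq => hm ⟨b, hEq⟩)]
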